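/- arXiv:1108.4192 — 2 statements merged into one kernel-verified Lean document; each statement's English description precedes it below -/
import Mathlib

section
/- Let Γ be a countable group and μ ∈ ℝΓ a finitely supported symmetric probability measure on Γ (μ_s ≥ 0 for all s, Σ_{s∈Γ} μ_s = 1, and μ_{s⁻¹} = μ_s for all s). Then Σ_{k=0}^∞ (μ^k)_e < ∞ if and only if Σ_{k=0}^∞ ‖μ^k‖_∞ < ∞. -/
open Filter Topology
open scoped Classical

noncomputable section

/-- `f ∈ ℝΓ` is well-balanced: finitely supported, coefficients sum to `0`,
nonpositive off the identity, symmetric, and with support generating `Γ`. -/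
def WellBalancedR {G : Type*} [Group G] (f : G → ℝ) : Prop :=
  (Function.support f).Finite ∧ (∑ᶠ s : G, f s) = 0 ∧
    (∀ s : G, s ≠ 1 → f s ≤ 0) ∧ (∀ s : G, f s⁻¹ = f s) ∧
    Subgroup.closure (Function.support f) = ⊤

/-- Convolution `(uv)_w = ∑_s u_s v_{s⁻¹ w}` in `ℝΓ`. -/
def convR {G : Type*} [Group G] (u v : G → ℝ) : G → ℝ :=
  fun w => ∑ᶠ s : G, u s * v (s⁻¹ * w)

/-- Convolution powers `u^k` in `ℝΓ`, with `u^0 = δ_e`. -/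
def convPow {G : Type*} [Group G] (u : G → ℝ) : ℕ → G → ℝ
  | 0 => fun s => if s = 1 then 1 else 0
  | k + 1 => convR u (convPow u k)

/-- `μ ∈ ℝΓ` associated to a well-balanced `f`: `μ_e = 0`, `μ_s = -f_s/f_e` for `s ≠ e`. -/
def muOf {G : Type*} [Group G] (f : G → ℝ) : G → ℝ :=
  fun s => if s = 1 then 0 else -(f s) / f 1

/-- `ω_s = f_e⁻¹ ∑_{k≥0} (μ^k)_s`. -/
def omegaOf {G : Type*} [Group G] (f : G → ℝ) : G → ℝ :=
  fun s => (f 1)⁻¹ * ∑' k : ℕ, convPow (muOf f) k s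

/-!
Realise `convPow μ k` as the coefficients of `μ ^ k` in the group ring, so that
`μ ^ (m + n) = μ ^ m * μ ^ n`. For symmetric `μ` the powers are symmetric, hence
`(μ ^ (2m))_s = ∑_a (μ^m)_a (μ^m)_{s⁻¹a} ≤ ∑_a (μ^m)_a ^ 2 = (μ ^ (2m))_e` by `2xy ≤ x² + y²`
and translation invariance of the sum; `(μ ^ (2m+1))_s` is a `μ`-average of values of
`μ ^ (2m)`, so `‖μ ^ k‖_∞ ≤ (μ ^ (2⌊k/2⌋))_e`. Summing, `∑_k ‖μ ^ k‖_∞ ≤ 2 ∑_m (μ ^ (2m))_e`,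
while `(μ ^ k)_e ≤ ‖μ ^ k‖_∞` gives the converse.
-/

open Function

namespace MonoidAlgebra

variable {R G : Type*} [Semiring R] [Group G]

lemma coeff_mul_eq_finsum (x y : MonoidAlgebra R G) (g : G) :
    (x * y).coeff g = ∑ᶠ h, x.coeff h * y.coeff (h⁻¹ * g) := by
  rw [coeff_mul_apply_left, Finsupp.sum, finsum_eq_sum_of_support_subset]
  exact fun h hh ↦ by simpa using left_ne_zero_of_mul hh

end MonoidAlgebra

section ConvolutionPowers

variable {G : Type*} [Group G] {μ : G → ℝ}

def toMonoidAlgebra (μ : G → ℝ) (hμ : HasFiniteSupport μ) : MonoidAlgebra ℝ G :=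
  .ofCoeff (Finsupp.ofSupportFinite μ hμ)

lemma convPow_succ_apply (k : ℕ) (w : G) :
    convPow μ (k + 1) w = ∑ᶠ s, μ s * convPow μ k (s⁻¹ * w) := rfl

lemma convPow_eq_coeff_pow (hμ : HasFiniteSupport μ) (k : ℕ) :
    convPow μ k = ⇑(toMonoidAlgebra μ hμ ^ k).coeff := by
  induction k with
  | zero =>
    ext s
    simp [convPow, MonoidAlgebra.one_def, Finsupp.single_apply, eq_comm]
  | succ k ih =>
    ext w
    rw [convPow_succ_apply, pow_succ', MonoidAlgebra.coeff_mul_eq_finsum, ih]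
    rfl

lemma hasFiniteSupport_convPow (hμ : HasFiniteSupport μ) (k : ℕ) :
    HasFiniteSupport (convPow μ k) := by
  rw [convPow_eq_coeff_pow hμ]
  exact Finsupp.hasFiniteSupport _

lemma convPow_one : convPow μ 1 = μ := by
  ext w
  rw [convPow_succ_apply, finsum_eq_single _ w fun s hs ↦ ?_] <;>
    simp [convPow, inv_mul_eq_one, *]

lemma convPow_add_apply (hμ : HasFiniteSupport μ) (m n : ℕ) (w : G) :
    convPow μ (m + n) w = ∑ᶠ a, convPow μ m a * convPow μ n (a⁻¹ * w) := by
  simp only [convPow_eq_coeff_pow hμ, pow_add, MonoidAlgebra.coeff_mul_eq_finsum]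

lemma convPow_nonneg (hpos : ∀ s, 0 ≤ μ s) (k : ℕ) (s : G) : 0 ≤ convPow μ k s := by
  induction k generalizing s with
  | zero => simp only [convPow]; positivity
  | succ k ih => exact finsum_nonneg fun a ↦ mul_nonneg (hpos a) (ih _)

lemma convPow_inv_apply (hμ : HasFiniteSupport μ) (hsymm : ∀ s, μ s⁻¹ = μ s) (k : ℕ) (s : G) :
    convPow μ k s⁻¹ = convPow μ k s := by
  induction k generalizing s with
  | zero => simp [convPow]
  | succ k ih =>
    rw [convPow_succ_apply, convPow_add_apply hμ, convPow_one,
      ← finsum_comp_equiv (Equiv.mulLeft s) (f := fun a ↦ convPow μ k a * μ (a⁻¹ * s))]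
    refine finsum_congr fun a ↦ ?_
    rw [Equiv.coe_mulLeft, mul_inv_rev, inv_mul_cancel_right, hsymm, ← mul_inv_rev, ih, mul_comm]

lemma finsum_mul_comp_mul_left_le {f : G → ℝ} (hf : HasFiniteSupport f) (g : G) :
    ∑ᶠ a, f a * f (g * a) ≤ ∑ᶠ a, f a * f a := by
  have htrans : ∑ᶠ a, f (g * a) * f (g * a) = ∑ᶠ a, f a * f a :=
    finsum_comp_equiv (Equiv.mulLeft g) (f := fun a ↦ f a * f a)
  have hamgm : ∑ᶠ a, 2 * (f a * f (g * a)) ≤ ∑ᶠ a, (f a * f a + f (g * a) * f (g * a)) :=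
    finsum_le_finsum' (by fun_prop) (by fun_prop (disch := exact mul_right_injective g))
      fun a ↦ by nlinarith [sq_nonneg (f a - f (g * a))]
  rw [← mul_finsum' _ _ (by fun_prop), finsum_add_distrib (by fun_prop)
    (by fun_prop (disch := exact mul_right_injective g)), htrans] at hamgm
  linarith

lemma convPow_two_mul_le (hμ : HasFiniteSupport μ) (hsymm : ∀ s, μ s⁻¹ = μ s) (m : ℕ) (s : G) :
    convPow μ (2 * m) s ≤ convPow μ (2 * m) 1 := by
  have hinv := convPow_inv_apply hμ hsymm m
  calc convPow μ (2 * m) s = ∑ᶠ a, convPow μ m a * convPow μ m (s⁻¹ * a) := by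
        rw [two_mul, convPow_add_apply hμ]
        simp only [← hinv (_⁻¹ * s), mul_inv_rev, inv_inv]
    _ ≤ ∑ᶠ a, convPow μ m a * convPow μ m a :=
        finsum_mul_comp_mul_left_le (hasFiniteSupport_convPow hμ m) s⁻¹
    _ = convPow μ (2 * m) 1 := by
        simp only [two_mul, convPow_add_apply hμ, mul_one, hinv]

lemma convPow_le_convPow_two_mul_div_two (hμ : HasFiniteSupport μ) (hpos : ∀ s, 0 ≤ μ s)
    (hsum : ∑ᶠ s, μ s = 1) (hsymm : ∀ s, μ s⁻¹ = μ s) (k : ℕ) (s : G) :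
    convPow μ k s ≤ convPow μ (2 * (k / 2)) 1 := by
  obtain ⟨m, rfl | rfl⟩ := Nat.even_or_odd' k
  · simpa using convPow_two_mul_le hμ hsymm m s
  · rw [show (2 * m + 1) / 2 = m by omega]
    calc convPow μ (2 * m + 1) s = ∑ᶠ a, μ a * convPow μ (2 * m) (a⁻¹ * s) :=
          convPow_succ_apply _ _
      _ ≤ ∑ᶠ a, μ a * convPow μ (2 * m) 1 :=
          finsum_le_finsum' (hμ.mul_left _) (hμ.mul_left _) fun a ↦
            mul_le_mul_of_nonneg_left (convPow_two_mul_le hμ hsymm m _) (hpos a)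
      _ = convPow μ (2 * m) 1 := by rw [← finsum_mul' _ _ hμ, hsum, one_mul]

end ConvolutionPowers

lemma Summable.comp_div_two {M : Type*} [AddCommMonoid M] [TopologicalSpace M] [ContinuousAdd M]
    {f : ℕ → M} (hf : Summable f) : Summable fun k ↦ f (k / 2) :=
  .even_add_odd (by simpa using hf) (by simpa [Nat.mul_add_div] using hf)

theorem stmt4_general {G : Type*} [Group G]
    (μ : G → ℝ) (hfin : (Function.support μ).Finite)
    (hpos : ∀ s : G, 0 ≤ μ s) (hsum : (∑ᶠ s : G, μ s) = 1)
    (hsymm : ∀ s : G, μ s⁻¹ = μ s) :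
    Summable (fun k : ℕ => convPow μ k 1) ↔
      Summable (fun k : ℕ => ⨆ s : G, |convPow μ k s|) := by
  have hbound := convPow_le_convPow_two_mul_div_two hfin hpos hsum hsymm
  have habs : ∀ k s, |convPow μ k s| = convPow μ k s := fun k s ↦
    abs_of_nonneg (convPow_nonneg hpos k s)
  constructor
  · intro h
    have heven : Summable fun m ↦ convPow μ (2 * m) 1 :=
      h.comp_injective (mul_right_injective₀ two_ne_zero)
    refine .of_nonneg_of_le (fun k ↦ Real.iSup_nonneg fun s ↦ abs_nonneg _)
      (fun k ↦ ciSup_le fun s ↦ ?_) heven.comp_div_two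
    rw [habs]
    exact hbound k s
  · intro h
    refine .of_nonneg_of_le (fun k ↦ convPow_nonneg hpos k 1) (fun k ↦ ?_) h
    have hbdd : BddAbove (Set.range fun s ↦ |convPow μ k s|) :=
      ⟨_, Set.forall_mem_range.2 fun s ↦ (habs k s).trans_le (hbound k s)⟩
    exact (habs k 1).symm.trans_le (le_ciSup hbdd 1)

/-- For a finitely supported symmetric probability measure `μ` on a countable group `Γ`,
`∑_k (μ^k)_e < ∞` iff `∑_k ‖μ^k‖_∞ < ∞`. -/
theorem stmt4 {G : Type*} [Group G] [Countable G]
    (μ : G → ℝ) (hfin : (Function.support μ).Finite)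
    (hpos : ∀ s : G, 0 ≤ μ s) (hsum : (∑ᶠ s : G, μ s) = 1)
    (hsymm : ∀ s : G, μ s⁻¹ = μ s) :
    Summable (fun k : ℕ => convPow μ k 1) ↔
      Summable (fun k : ℕ => ⨆ s : G, |convPow μ k s|) :=
  stmt4_general μ hfin hpos hsum hsymm
end
end

section
/- Let Γ be a countably infinite group, f ∈ ℝΓ well-balanced, μ ∈ ℝΓ given by μ_e = 0 and μ_s = −f_s/f_e for s ≠ e, assume Σ_{k=0}^∞ ‖μ^k‖_∞ < ∞, and set ω_s = f_e^{-1} Σ_{k=0}^∞ (μ^k)_s. Let g : Γ → ℝ tend to 0 along the cofinite filter on Γ, and suppose gf ∈ ℓ¹(Γ), i.e. Σ_{w∈Γ} |(gf)_w| < ∞ where (gf)_w = Σ_{s∈Γ} g_{ws⁻¹} f_s (a finite sum over the support of f). Then (gf)ω = g: for every w ∈ Γ, the series Σ_{t∈Γ} (gf)_t ω_{t⁻¹w} converges absolutely and equals g_w. -/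
open Filter Topology
open scoped Classical

noncomputable section

/-!
Since `f` is well-balanced, `f = f_e (δ_e - μ)` with `μ` a finitely supported probability on `Γ`,
so `gf = f_e (g - gμ)`. By associativity of convolution, the `k`-th term of `(gf)ω` at `w` is
`B_k - B_{k+1}` with `B_k = (gμ^k)_w`, so the series telescopes to `B_0 - lim B_k = g_w`.
The `B_k` tend to `0` because `g ∈ C₀(Γ)` and the probabilities `μ^k` tend to `0` pointwise;
summability of `‖μ^k‖_∞` also bounds `ω` and justifies exchanging the sums over `t` and `k`.
-/

open Function
open scoped Pointwise

theorem finsum_comm_of_hasFiniteSupport {α β M : Type*} [AddCommMonoid M] {F : α → β → M}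
    (hF : (uncurry F).HasFiniteSupport) :
    ∑ᶠ a, ∑ᶠ b, F a b = ∑ᶠ b, ∑ᶠ a, F a b := by
  have hF' : (uncurry F ∘ Prod.swap).HasFiniteSupport := by
    change (support (uncurry F ∘ Prod.swap)).Finite
    rw [support_comp_eq_preimage]
    exact hF.preimage Prod.swap_injective.injOn
  calc ∑ᶠ a, ∑ᶠ b, F a b = ∑ᶠ p, uncurry F p := (finsum_curry _ hF).symm
    _ = ∑ᶠ q : β × α, uncurry F q.swap := (finsum_comp_equiv (Equiv.prodComm β α)).symm
    _ = ∑ᶠ b, ∑ᶠ a, F a b := finsum_curry _ hF'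

section Convolution

variable {G : Type*} [Group G]

theorem convR_eq_finsum_mul_right (u v : G → ℝ) (w : G) :
    convR u v w = ∑ᶠ s, u (w * s⁻¹) * v s := by
  rw [convR, ← finsum_comp_equiv ((Equiv.inv G).trans (Equiv.mulLeft w))]
  simp

theorem hasFiniteSupport_mul_translate (u : G → ℝ) {v : G → ℝ} (hv : v.HasFiniteSupport)
    (w : G) : (fun t => u t * v (t⁻¹ * w)).HasFiniteSupport := by
  refine (hv.image fun y => w * y⁻¹).subset fun t ht => ⟨t⁻¹ * w, right_ne_zero_of_mul ht, ?_⟩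
  simp

theorem convR_eq_tsum (u : G → ℝ) {v : G → ℝ} (hv : v.HasFiniteSupport) (w : G) :
    convR u v w = ∑' t, u t * v (t⁻¹ * w) :=
  (tsum_eq_finsum (hasFiniteSupport_mul_translate u hv w)).symm

theorem support_convR_subset (u v : G → ℝ) : support (convR u v) ⊆ support u * support v := by
  intro w hw
  obtain ⟨s, hs⟩ : ∃ s, u s * v (s⁻¹ * w) ≠ 0 := by
    by_contra! h
    exact hw (finsum_eq_zero_of_forall_eq_zero h)
  exact ⟨s, left_ne_zero_of_mul hs, s⁻¹ * w, right_ne_zero_of_mul hs, by simp⟩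

theorem convR_smul_left (c : ℝ) (u v : G → ℝ) : convR (c • u) v = c • convR u v := by
  ext w
  simp only [convR, Pi.smul_apply, smul_eq_mul, mul_finsum, mul_assoc]

theorem convR_smul_right (c : ℝ) (u v : G → ℝ) : convR u (c • v) = c • convR u v := by
  ext w
  simp only [convR_eq_finsum_mul_right, Pi.smul_apply, smul_eq_mul, mul_finsum, mul_left_comm]

theorem convR_sub_left (u u' : G → ℝ) {v : G → ℝ} (hv : v.HasFiniteSupport) :
    convR (u - u') v = convR u v - convR u' v := by
  ext w
  simp only [convR, Pi.sub_apply, sub_mul]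
  exact finsum_sub_distrib (hasFiniteSupport_mul_translate u hv w)
    (hasFiniteSupport_mul_translate u' hv w)

theorem convR_sub_right (u : G → ℝ) {v v' : G → ℝ} (hv : v.HasFiniteSupport)
    (hv' : v'.HasFiniteSupport) : convR u (v - v') = convR u v - convR u v' := by
  ext w
  simp only [convR_eq_finsum_mul_right, Pi.sub_apply, mul_sub]
  exact finsum_sub_distrib (hv.subset fun s hs => right_ne_zero_of_mul hs)
    (hv'.subset fun s hs => right_ne_zero_of_mul hs)

theorem convPow_zero (u : G → ℝ) : convPow u 0 = Pi.single 1 1 := by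
  ext s
  simp [convPow, Pi.single_apply]

theorem convR_single_one_right (u : G → ℝ) : convR u (Pi.single 1 1) = u := by
  ext w
  rw [convR_eq_finsum_mul_right, finsum_eq_single _ 1 fun s hs => by simp [hs]]
  simp

theorem convR_assoc (u : G → ℝ) {v x : G → ℝ} (hv : v.HasFiniteSupport)
    (hx : x.HasFiniteSupport) : convR (convR u v) x = convR u (convR v x) := by
  ext w
  have hfin : (uncurry fun a c => u c * v (c⁻¹ * a) * x (a⁻¹ * w)).HasFiniteSupport := by
    refine ((hx.prod hv).image fun p => (w * p.1⁻¹, w * p.1⁻¹ * p.2⁻¹)).subset ?_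
    rintro ⟨a, c⟩ h
    have h' := left_ne_zero_of_mul h
    exact ⟨(a⁻¹ * w, c⁻¹ * a), ⟨right_ne_zero_of_mul h, right_ne_zero_of_mul h'⟩, by simp⟩
  simp only [convR, finsum_mul, mul_finsum]
  rw [finsum_comm_of_hasFiniteSupport hfin]
  refine finsum_congr fun c => ?_
  rw [← finsum_comp_equiv (Equiv.mulLeft c)]
  simp [mul_assoc]

theorem finsum_convR {u v : G → ℝ} (hu : u.HasFiniteSupport) (hv : v.HasFiniteSupport) :
    ∑ᶠ w, convR u v w = (∑ᶠ s, u s) * ∑ᶠ s, v s := by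
  have hfin : (uncurry fun w s => u s * v (s⁻¹ * w)).HasFiniteSupport := by
    refine ((hu.prod hv).image fun p => (p.1 * p.2, p.1)).subset ?_
    rintro ⟨w, s⟩ h
    exact ⟨(s, s⁻¹ * w), ⟨left_ne_zero_of_mul h, right_ne_zero_of_mul h⟩, by simp⟩
  simp only [convR]
  rw [finsum_comm_of_hasFiniteSupport hfin, finsum_mul]
  refine finsum_congr fun s => ?_
  rw [← mul_finsum, ← finsum_comp_equiv (Equiv.mulLeft s)]
  simp

end Convolution

structure IsFiniteProbability {α : Type*} (p : α → ℝ) : Prop where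
  hasFiniteSupport : p.HasFiniteSupport
  nonneg : ∀ s, 0 ≤ p s
  finsum_eq_one : ∑ᶠ s, p s = 1

namespace IsFiniteProbability

theorem le_one {α : Type*} {p : α → ℝ} (hp : IsFiniteProbability p) (s : α) : p s ≤ 1 :=
  hp.finsum_eq_one ▸ single_le_finsum s hp.hasFiniteSupport hp.nonneg

theorem le_ciSup_abs {α : Type*} {p : α → ℝ} (hp : IsFiniteProbability p) (s : α) :
    p s ≤ ⨆ s, |p s| := by
  refine (le_abs_self _).trans (le_ciSup (f := fun s => |p s|) ⟨1, ?_⟩ s)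
  rintro _ ⟨t, rfl⟩
  dsimp only
  rw [abs_of_nonneg (hp.nonneg t)]
  exact hp.le_one t

theorem single {α : Type*} [DecidableEq α] (a : α) : IsFiniteProbability (Pi.single a 1) where
  hasFiniteSupport := (Set.finite_singleton a).subset Pi.support_single_subset
  nonneg s := by
    by_cases hs : s = a <;> simp [hs]
  finsum_eq_one := by
    rw [finsum_eq_single _ a fun s hs => by simp [hs]]
    simp

variable {G : Type*} [Group G] {p : G → ℝ}

theorem hasSum_translate (hp : IsFiniteProbability p) (w : G) :
    HasSum (fun t => p (t⁻¹ * w)) 1 := by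
  have hfin : (fun t => p (t⁻¹ * w)).HasFiniteSupport := by
    simpa using hasFiniteSupport_mul_translate 1 hp.hasFiniteSupport w
  convert (summable_of_hasFiniteSupport hfin : Summable fun t => p (t⁻¹ * w)).hasSum
  rw [tsum_eq_finsum hfin, ← hp.finsum_eq_one,
    ← finsum_comp_equiv ((Equiv.inv G).trans (Equiv.mulRight w))]
  simp

theorem convR {q : G → ℝ} (hp : IsFiniteProbability p) (hq : IsFiniteProbability q) :
    IsFiniteProbability (_root_.convR p q) where
  hasFiniteSupport :=
    (hp.hasFiniteSupport.mul hq.hasFiniteSupport).subset (support_convR_subset p q)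
  nonneg w := finsum_nonneg fun s => mul_nonneg (hp.nonneg s) (hq.nonneg _)
  finsum_eq_one := by
    rw [finsum_convR hp.hasFiniteSupport hq.hasFiniteSupport, hp.finsum_eq_one,
      hq.finsum_eq_one, one_mul]

theorem convPow (hp : IsFiniteProbability p) : ∀ k, IsFiniteProbability (convPow p k)
  | 0 => convPow_zero p ▸ single 1
  | k + 1 => hp.convR (hp.convPow k)

theorem abs_convR_le (hp : IsFiniteProbability p) {u : G → ℝ} {c : ℝ} (hu : ∀ t, |u t| ≤ c)
    (w : G) : |_root_.convR u p w| ≤ c := by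
  rw [convR_eq_tsum u hp.hasFiniteSupport]
  refine tsum_of_norm_bounded (f := fun t => u t * p (t⁻¹ * w))
    (by simpa using (hp.hasSum_translate w).mul_left c) fun t => ?_
  rw [Real.norm_eq_abs, abs_mul, abs_of_nonneg (hp.nonneg _)]
  exact mul_le_mul_of_nonneg_right (hu t) (hp.nonneg _)

end IsFiniteProbability

theorem hasSum_sub_succ_of_tendsto {M : Type*} [AddCommGroup M] [TopologicalSpace M]
    [IsTopologicalAddGroup M] [T2Space M] {b : ℕ → M} {l : M} (hb : Tendsto b atTop (𝓝 l))
    (hs : Summable fun n => b n - b (n + 1)) : HasSum (fun n => b n - b (n + 1)) (b 0 - l) :=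
  hs.hasSum_iff_tendsto_nat.2 <| by
    simpa only [Finset.sum_range_sub'] using tendsto_const_nhds.sub hb

section Green

variable {G : Type*} [Group G]

theorem tendsto_convR_nhds_zero {ι : Type*} {l : Filter ι} {p : ι → G → ℝ}
    (hp : ∀ i, IsFiniteProbability (p i)) (hp0 : ∀ s, Tendsto (fun i => p i s) l (𝓝 0))
    {g : G → ℝ} (hg : Tendsto g cofinite (𝓝 0)) (w : G) :
    Tendsto (fun i => convR g (p i) w) l (𝓝 0) := by
  rw [Metric.tendsto_nhds]
  intro ε hε
  have hK : {t | ¬ |g t| < ε / 2}.Finite := by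
    simpa [Real.dist_eq] using Metric.tendsto_nhds.1 hg (ε / 2) (half_pos hε)
  set K := hK.toFinset
  set g₁ := (K : Set G).indicator g
  have hfar : ∀ i, |convR (g - g₁) (p i) w| ≤ ε / 2 := by
    refine fun i => (hp i).abs_convR_le (fun t => ?_) w
    by_cases ht : t ∈ K
    · simpa [g₁, ht] using (half_pos hε).le
    · rw [Pi.sub_apply, show g₁ t = 0 from Set.indicator_of_notMem (by exact_mod_cast ht) g,
        sub_zero]
      simpa [K] using (not_not.1 (mt hK.mem_toFinset.2 ht)).le
  have hnear : Tendsto (fun i => convR g₁ (p i) w) l (𝓝 0) := by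
    have hsum : ∀ i, convR g₁ (p i) w = ∑ t ∈ K, g t * p i (t⁻¹ * w) := fun i => by
      rw [convR, finsum_eq_sum_of_support_subset _ fun t ht => ?_]
      · exact Finset.sum_congr rfl fun t ht => by simp [g₁, ht]
      · by_contra hK'
        exact ht (by simp [g₁, hK'])
    simpa [hsum] using tendsto_finsetSum K fun t _ => (hp0 (t⁻¹ * w)).const_mul (g t)
  filter_upwards [Metric.tendsto_nhds.1 hnear (ε / 2) (half_pos hε)] with i hi
  have hsplit := congrFun (convR_sub_left g g₁ (hp i).hasFiniteSupport) w
  rw [Pi.sub_apply] at hsplit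
  rw [Real.dist_eq, sub_zero] at hi ⊢
  calc |convR g (p i) w| = |convR g₁ (p i) w + convR (g - g₁) (p i) w| := by
        rw [hsplit, add_sub_cancel]
    _ ≤ |convR g₁ (p i) w| + |convR (g - g₁) (p i) w| := abs_add_le _ _
    _ < ε := by linarith [hfar i]

-- `omegaOf f = (f 1)⁻¹ • green (muOf f)`.
def green (μ : G → ℝ) (s : G) : ℝ := ∑' k, convPow μ k s

variable {μ : G → ℝ}

theorem summable_convPow_apply (hμ : IsFiniteProbability μ)
    (hsum : Summable fun k => ⨆ s, |convPow μ k s|) (s : G) :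
    Summable fun k => convPow μ k s :=
  hsum.of_nonneg_of_le (fun k => (hμ.convPow k).nonneg s) fun k => (hμ.convPow k).le_ciSup_abs s

theorem abs_green_le (hμ : IsFiniteProbability μ)
    (hsum : Summable fun k => ⨆ s, |convPow μ k s|) (s : G) :
    |green μ s| ≤ ∑' k, ⨆ s, |convPow μ k s| := by
  have hnonneg : 0 ≤ green μ s := tsum_nonneg fun k => (hμ.convPow k).nonneg s
  rw [abs_of_nonneg hnonneg]
  exact (summable_convPow_apply hμ hsum s).tsum_le_tsum (fun k => (hμ.convPow k).le_ciSup_abs s)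
    hsum

theorem summable_abs_mul_green (hμ : IsFiniteProbability μ)
    (hsum : Summable fun k => ⨆ s, |convPow μ k s|) {h : G → ℝ}
    (hh : Summable fun t => |h t|) (w : G) :
    Summable fun t => |h t * green μ (t⁻¹ * w)| :=
  (hh.mul_right _).of_nonneg_of_le (fun _ => abs_nonneg _) fun t => by
    rw [abs_mul]
    exact mul_le_mul_of_nonneg_left (abs_green_le hμ hsum _) (abs_nonneg _)

theorem tsum_sub_convR_mul_green (hμ : IsFiniteProbability μ)
    (hsum : Summable fun k => ⨆ s, |convPow μ k s|) {g : G → ℝ}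
    (hg : Tendsto g cofinite (𝓝 0)) (hh : Summable fun t => |g t - convR g μ t|) (w : G) :
    ∑' t, (g t - convR g μ t) * green μ (t⁻¹ * w) = g w := by
  set B := fun k => convR g (convPow μ k) w
  have hF : Summable (uncurry fun t k => (g t - convR g μ t) * convPow μ k (t⁻¹ * w)) := by
    refine (hh.mul_of_nonneg hsum (fun _ => abs_nonneg _)
      fun k => Real.iSup_nonneg fun _ => abs_nonneg _).of_norm_bounded ?_
    rintro ⟨t, k⟩
    rw [uncurry_apply_pair, Real.norm_eq_abs, abs_mul,
      abs_of_nonneg ((hμ.convPow k).nonneg (t⁻¹ * w))]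
    exact mul_le_mul_of_nonneg_left ((hμ.convPow k).le_ciSup_abs _) (abs_nonneg _)
  have hstep : ∀ k, ∑' t, (g t - convR g μ t) * convPow μ k (t⁻¹ * w) = B k - B (k + 1) := by
    intro k
    have hk := (hμ.convPow k).hasFiniteSupport
    have hA := convR_eq_tsum (g - convR g μ) hk w
    simp only [Pi.sub_apply] at hA
    rw [← hA, convR_sub_left _ _ hk, convR_assoc g hμ.hasFiniteSupport hk]
    rfl
  have hB : Tendsto B atTop (𝓝 0) := tendsto_convR_nhds_zero hμ.convPow
    (fun s => (summable_convPow_apply hμ hsum s).tendsto_atTop_zero) hg w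
  have hA : HasSum (fun k => B k - B (k + 1)) (g w) := by
    simpa [B, convPow_zero, convR_single_one_right] using
      hasSum_sub_succ_of_tendsto hB (hF.prod_symm.prod.congr hstep)
  calc ∑' t, (g t - convR g μ t) * green μ (t⁻¹ * w)
      = ∑' t, ∑' k, (g t - convR g μ t) * convPow μ k (t⁻¹ * w) := by
        simp only [green, tsum_mul_left]
    _ = ∑' k, ∑' t, (g t - convR g μ t) * convPow μ k (t⁻¹ * w) := hF.tsum_comm.symm
    _ = ∑' k, (B k - B (k + 1)) := tsum_congr hstep
    _ = g w := hA.tsum_eq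

end Green

section WellBalanced

variable {G : Type*} [Group G] {f : G → ℝ}

theorem muOf_eq_single_sub (hf1 : f 1 ≠ 0) : muOf f = Pi.single 1 1 - (f 1)⁻¹ • f := by
  ext s
  by_cases hs : s = 1
  · simp [muOf, hs, hf1]
  · simp [muOf, hs, div_eq_inv_mul]

theorem support_muOf_subset (f : G → ℝ) : support (muOf f) ⊆ support f := by
  intro s hs h0
  simp [muOf, h0] at hs

theorem WellBalancedR.apply_one_pos [Nontrivial G] (hf : WellBalancedR f) : 0 < f 1 := by
  obtain ⟨hfin, hsum, hle, -, hgen⟩ := hf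
  by_contra! h1
  have hnonpos : ∀ s, f s ≤ 0 := fun s => by
    by_cases hs : s = 1
    · exact hs ▸ h1
    · exact hle s hs
  have hzero : support f = ∅ := by
    refine Set.eq_empty_of_forall_notMem fun s hs => ?_
    have hpos := finsum_pos (f := fun s => -f s) (fun t => neg_nonneg.2 (hnonpos t))
      ⟨s, neg_pos.2 ((hnonpos s).lt_of_ne hs)⟩ (hfin.subset fun t ht => by simpa using ht)
    rw [finsum_neg_distrib, hsum, neg_zero] at hpos
    exact hpos.false
  rw [hzero, Subgroup.closure_empty] at hgen
  exact bot_ne_top hgen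

theorem WellBalancedR.isFiniteProbability_muOf [Nontrivial G] (hf : WellBalancedR f) :
    IsFiniteProbability (muOf f) := by
  have hf1 := hf.apply_one_pos
  refine ⟨hf.1.subset (support_muOf_subset f), fun s => ?_, ?_⟩
  · by_cases hs : s = 1
    · simp [muOf, hs]
    · simpa [muOf, hs] using div_nonneg (neg_nonneg.2 (hf.2.2.1 s hs)) hf1.le
  · rw [muOf_eq_single_sub hf1.ne']
    simp only [Pi.sub_apply, Pi.smul_apply, smul_eq_mul]
    rw [finsum_sub_distrib (IsFiniteProbability.single 1).hasFiniteSupport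
      (hf.1.subset fun s hs => right_ne_zero_of_mul hs), ← mul_finsum, hf.2.1, mul_zero,
      (IsFiniteProbability.single 1).finsum_eq_one, sub_zero]

theorem WellBalancedR.convR_eq [Nontrivial G] (hf : WellBalancedR f) (g : G → ℝ) :
    convR g f = f 1 • (g - convR g (muOf f)) := by
  have hf1 := hf.apply_one_pos.ne'
  have hf_eq : f = f 1 • (Pi.single 1 1 - muOf f) := by
    rw [muOf_eq_single_sub hf1, sub_sub_cancel, smul_smul, mul_inv_cancel₀ hf1, one_smul]
  conv_lhs => rw [hf_eq]
  rw [convR_smul_right, convR_sub_right _ (IsFiniteProbability.single 1).hasFiniteSupport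
    hf.isFiniteProbability_muOf.hasFiniteSupport, convR_single_one_right]

end WellBalanced

theorem stmt5_general {G : Type*} [Group G] [Infinite G]
    (f : G → ℝ) (hf : WellBalancedR f)
    (hsum : Summable (fun k : ℕ => ⨆ s : G, |convPow (muOf f) k s|))
    (g : G → ℝ) (hg0 : Tendsto g cofinite (𝓝 0))
    (hgf : Summable (fun w : G => |∑ᶠ s : G, g (w * s⁻¹) * f s|)) :
    ∀ w : G,
      Summable (fun t : G => |(∑ᶠ s : G, g (t * s⁻¹) * f s) * omegaOf f (t⁻¹ * w)|) ∧
      (∑' t : G, (∑ᶠ s : G, g (t * s⁻¹) * f s) * omegaOf f (t⁻¹ * w)) = g w := by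
  intro w
  have hf1 := hf.apply_one_pos
  have hμ := hf.isFiniteProbability_muOf
  have hgf_eq : ∀ t, ∑ᶠ s, g (t * s⁻¹) * f s = f 1 * (g t - convR g (muOf f) t) := fun t => by
    rw [← convR_eq_finsum_mul_right, hf.convR_eq g]
    rfl
  have hterm : ∀ t, (∑ᶠ s, g (t * s⁻¹) * f s) * omegaOf f (t⁻¹ * w) =
      (g t - convR g (muOf f) t) * green (muOf f) (t⁻¹ * w) := fun t => by
    rw [hgf_eq, omegaOf, green]
    field_simp
  have hh : Summable fun t => |g t - convR g (muOf f) t| := by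
    simp_rw [hgf_eq, abs_mul, abs_of_pos hf1] at hgf
    exact (summable_mul_left_iff hf1.ne').1 hgf
  simp only [hterm]
  exact ⟨summable_abs_mul_green hμ hsum hh w, tsum_sub_convR_mul_green hμ hsum hg0 hh w⟩

/-- If `g ∈ C₀(Γ)` and `gf ∈ ℓ¹(Γ)` then `(gf)ω = g`. -/
theorem stmt5 {G : Type*} [Group G] [Countable G] [Infinite G]
    (f : G → ℝ) (hf : WellBalancedR f)
    (hsum : Summable (fun k : ℕ => ⨆ s : G, |convPow (muOf f) k s|))
    (g : G → ℝ) (hg0 : Tendsto g cofinite (𝓝 0))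
    (hgf : Summable (fun w : G => |∑ᶠ s : G, g (w * s⁻¹) * f s|)) :
    ∀ w : G,
      Summable (fun t : G => |(∑ᶠ s : G, g (t * s⁻¹) * f s) * omegaOf f (t⁻¹ * w)|) ∧
      (∑' t : G, (∑ᶠ s : G, g (t * s⁻¹) * f s) * omegaOf f (t⁻¹ * w)) = g w :=
  stmt5_general f hf hsum g hg0 hgf
end
end
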